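/- Let K be a field, m ≥ 3 and n ≥ 2m integers, k = ⌊(n+1)/(m+1)⌋, and 1 ≤ j ≤ k−1. Let L_j = (I_{n,m} : x_m x_{2m+1} ⋯ x_{j(m+1)−1}). Then the ideal U_{j+1} = L_j + (x_{(j+1)(m+1)−1}) equals the ideal of S generated by: for each 0 ≤ l ≤ j−1, the monomials u_i / x_{(l+1)(m+1)−1} for l(m+1)+1 ≤ i ≤ (l+1)(m+1)−1, together with the variable x_{(j+1)(m+1)−1} and the monomials u_i for (j+1)(m+1) ≤ i ≤ n−m+1. -/

import Mathlib

/-!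
All ideals involved are squarefree monomial ideals, and the colon of such an ideal by a
squarefree monomial `x_F` is generated by its generators with the variables of `F` deleted.
The variables of `x_m x_{2m+1} ⋯ x_{j(m+1)-1}` sit at the positions `l(m+1) - 1`, which are
`m + 1` apart, so the window `{i, …, i+m-1}` of `u_i` contains `(l+1)(m+1) - 1` when
`l(m+1) < i < (l+1)(m+1)` with `l < j`, and no marked position otherwise. Hence `u_i` with its
marked variable deleted is `u_i / x_{(l+1)(m+1)-1}`, a multiple of `u_{i-1} / x_{i-1}` when
`i = l(m+1)`, a multiple of `x_{(j+1)(m+1)-1}` when `j(m+1) < i < (j+1)(m+1)`, and `u_i` itself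
beyond; comparing generators by divisibility gives both inclusions.
-/

open MvPolynomial

/-- The generator `u_i = x_i x_{i+1} ⋯ x_{i+m-1}` of the path ideal, where the
variables of `K[x_1,…,x_n]` are 1-indexed via `x_t = X ⟨t-1⟩`. -/
noncomputable def pathGen (K : Type) [Field K] (n m i : ℕ) : MvPolynomial (Fin n) K :=
  ∏ j ∈ Finset.univ.filter (fun j : Fin n => i ≤ (j : ℕ) + 1 ∧ (j : ℕ) + 1 < i + m),
    X j

/-- The monomial `u_i / x_p = ∏_{i ≤ l ≤ i+m-1, l ≠ p} x_l`. -/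
noncomputable def pathGenDiv (K : Type) [Field K] (n m i p : ℕ) : MvPolynomial (Fin n) K :=
  ∏ j ∈ Finset.univ.filter
      (fun j : Fin n => (i ≤ (j : ℕ) + 1 ∧ (j : ℕ) + 1 < i + m) ∧ (j : ℕ) + 1 ≠ p),
    X j

/-- The path ideal `I_{n,m} = (u_1, …, u_{n-m+1}) ⊆ K[x_1,…,x_n]` of the line graph. -/
noncomputable def pathIdeal (K : Type) [Field K] (n m : ℕ) : Ideal (MvPolynomial (Fin n) K) :=
  Ideal.span {q | ∃ i : ℕ, 1 ≤ i ∧ i ≤ n - m + 1 ∧ q = pathGen K n m i}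

/-- The variable `x_t` of `K[x_1,…,x_n]` (1-indexed; junk value `0` out of range). -/
noncomputable def xv (K : Type) [Field K] (n t : ℕ) : MvPolynomial (Fin n) K :=
  if h : 1 ≤ t ∧ t ≤ n then X (⟨t - 1, by omega⟩ : Fin n) else 0

theorem Ideal.span_le_span_of_forall_dvd {R : Type*} [CommSemiring R] {S T : Set R}
    (h : ∀ s ∈ S, ∃ t ∈ T, t ∣ s) : Ideal.span S ≤ Ideal.span T := by
  refine Ideal.span_le.2 fun s hs => ?_
  obtain ⟨t, ht, c, rfl⟩ := h s hs
  exact Ideal.mul_mem_right c _ (Ideal.subset_span ht)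

namespace MvPolynomial

variable {σ R : Type*} [CommSemiring R]

theorem colon_span_monomial_image (E : Set (σ →₀ ℕ)) (F : σ →₀ ℕ) :
    (Ideal.span ((fun e => monomial e (1 : R)) '' E)).colon (Ideal.span {monomial F (1 : R)}) =
      Ideal.span ((fun e => monomial (e - F) (1 : R)) '' E) := by
  rw [← Set.image_image (fun e => monomial e (1 : R)) (· - F)]
  ext g
  rw [Ideal.mem_colon_span_singleton, mem_ideal_span_monomial_image, mem_ideal_span_monomial_image]
  constructor
  · intro h d hd
    obtain ⟨e, he, hle⟩ := h (d + F) (by simpa [coeff_mul_monomial] using hd)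
    exact ⟨e - F, ⟨e, he, rfl⟩, tsub_le_iff_right.mpr hle⟩
  · intro h d hd
    rw [mem_support_iff, coeff_mul_monomial'] at hd
    split_ifs at hd with hF
    · obtain ⟨_, ⟨e, he, rfl⟩, hle⟩ := h (d - F) (by simpa using hd)
      exact ⟨e, he, (tsub_le_iff_right.mp hle).trans_eq (tsub_add_cancel_of_le hF)⟩
    · exact absurd rfl hd

theorem prod_X_eq_monomial_indicator (s : Finset σ) :
    ∏ a ∈ s, (X a : MvPolynomial σ R) = monomial (Finsupp.indicator s fun _ _ => 1) 1 := by
  simpa using prod_X_pow (R := R) (fun _ => 1) s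

theorem colon_span_prod_X_image [DecidableEq σ] {ι : Type*} (S : ι → Finset σ) (J : Set ι)
    (F : Finset σ) :
    (Ideal.span ((fun i => ∏ a ∈ S i, (X a : MvPolynomial σ R)) '' J)).colon
        (Ideal.span {∏ a ∈ F, (X a : MvPolynomial σ R)}) =
      Ideal.span ((fun i => ∏ a ∈ S i \ F, (X a : MvPolynomial σ R)) '' J) := by
  have indicator_sub (s : Finset σ) : (Finsupp.indicator s fun _ _ => 1) -
      (Finsupp.indicator F fun _ _ => 1) = Finsupp.indicator (s \ F) fun _ _ => (1 : ℕ) := by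
    ext a
    simp only [Finsupp.tsub_apply, Finsupp.indicator_apply, Finset.mem_sdiff]
    split_ifs <;> simp_all
  simp only [prod_X_eq_monomial_indicator, ← indicator_sub]
  rw [← Set.image_image (fun e => monomial e (1 : R)), colon_span_monomial_image, Set.image_image]

end MvPolynomial

def varsAt (n : ℕ) (P : ℕ → Prop) [DecidablePred P] : Finset (Fin n) :=
  Finset.univ.filter fun a => P (a + 1)

section varsAt

variable {n : ℕ} {P Q : ℕ → Prop} [DecidablePred P] [DecidablePred Q]

@[simp]
theorem mem_varsAt {a : Fin n} : a ∈ varsAt n P ↔ P (a + 1) := by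
  simp [varsAt]

theorem varsAt_mono (h : ∀ t, P t → Q t) : varsAt n P ⊆ varsAt n Q :=
  fun _ ha => mem_varsAt.2 (h _ (mem_varsAt.1 ha))

theorem varsAt_sdiff : varsAt n P \ varsAt n Q = varsAt n fun t => P t ∧ ¬Q t := by
  ext a
  simp

end varsAt

section xv

variable {K : Type} [Field K] {n : ℕ}

theorem xv_of_le {t : ℕ} (h₁ : 1 ≤ t) (h₂ : t ≤ n) : xv K n t = X ⟨t - 1, by omega⟩ := by
  rw [xv, dif_pos ⟨h₁, h₂⟩]

theorem xv_dvd_prod_varsAt {t : ℕ} (h₁ : 1 ≤ t) (h₂ : t ≤ n) (P : ℕ → Prop) [DecidablePred P]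
    (ht : P t) : xv K n t ∣ ∏ a ∈ varsAt n P, X a := by
  rw [xv_of_le h₁ h₂]
  exact Finset.dvd_prod_of_mem _ (mem_varsAt.2 (by rwa [Nat.sub_add_cancel h₁]))

theorem prod_xv {T : Finset ℕ} (hT : ∀ t ∈ T, 1 ≤ t ∧ t ≤ n) :
    ∏ t ∈ T, xv K n t = ∏ a ∈ varsAt n (· ∈ T), X a := by
  refine Finset.prod_bij' (fun t ht => ⟨t - 1, by grind⟩) (fun a _ => a + 1) ?_ ?_ ?_ ?_ ?_
  · intro t ht
    simpa [Nat.sub_add_cancel (hT t ht).1] using ht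
  · intro a ha
    simpa using ha
  · intro t ht
    simp [Nat.sub_add_cancel (hT t ht).1]
  · intro a _
    simp
  · intro t ht
    exact xv_of_le (hT t ht).1 (hT t ht).2

end xv

def markedPos (m j : ℕ) : Finset ℕ :=
  (Finset.Icc 1 j).image fun l => l * (m + 1) - 1

section markedPos

variable {m j t : ℕ}

theorem mem_markedPos : t ∈ markedPos m j ↔ ∃ l, (1 ≤ l ∧ l ≤ j) ∧ l * (m + 1) - 1 = t := by
  simp [markedPos]

theorem mul_sub_one_mem_markedPos {l : ℕ} (hl : 1 ≤ l) (hlj : l ≤ j) :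
    l * (m + 1) - 1 ∈ markedPos m j :=
  mem_markedPos.2 ⟨l, ⟨hl, hlj⟩, rfl⟩

theorem lt_of_mem_markedPos (ht : t ∈ markedPos m j) : t < j * (m + 1) := by
  obtain ⟨l, ⟨hl, hlj⟩, rfl⟩ := mem_markedPos.1 ht
  have : m + 1 ≤ l * (m + 1) := Nat.le_mul_of_pos_left _ hl
  have := Nat.mul_le_mul_right (m + 1) hlj
  omega

theorem succ_eq_of_mem_markedPos {q : ℕ} (ht : t ∈ markedPos m j) (h₁ : q * (m + 1) ≤ t)
    (h₂ : t + 1 < (q + 2) * (m + 1)) : t + 1 = (q + 1) * (m + 1) := by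
  obtain ⟨l, ⟨hl, -⟩, rfl⟩ := mem_markedPos.1 ht
  have : m + 1 ≤ l * (m + 1) := Nat.le_mul_of_pos_left _ hl
  have hql : q < l := Nat.lt_of_mul_lt_mul_right (a := m + 1) (by omega)
  have hlq : l < q + 2 := Nat.lt_of_mul_lt_mul_right (a := m + 1) (by omega)
  obtain rfl : l = q + 1 := by omega
  omega

end markedPos

theorem prod_xv_markedPos (K : Type) [Field K] {n m j : ℕ} (hm : 1 ≤ m) (h : j * (m + 1) ≤ n) :
    ∏ l ∈ Finset.Icc 1 j, xv K n (l * (m + 1) - 1) = ∏ a ∈ varsAt n (· ∈ markedPos m j), X a := by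
  have hinj : ∀ l₁ ∈ Finset.Icc 1 j, ∀ l₂ ∈ Finset.Icc 1 j,
      l₁ * (m + 1) - 1 = l₂ * (m + 1) - 1 → l₁ = l₂ := by
    intro l₁ hl₁ l₂ hl₂ hl
    have : m + 1 ≤ l₁ * (m + 1) := Nat.le_mul_of_pos_left _ (Finset.mem_Icc.1 hl₁).1
    have : m + 1 ≤ l₂ * (m + 1) := Nat.le_mul_of_pos_left _ (Finset.mem_Icc.1 hl₂).1
    exact Nat.eq_of_mul_eq_mul_right (show 0 < m + 1 by omega) (by omega)
  refine (Finset.prod_image hinj).symm.trans (prod_xv fun t ht => ?_)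
  have := lt_of_mem_markedPos ht
  obtain ⟨l, ⟨hl, -⟩, rfl⟩ := mem_markedPos.1 ht
  have : m + 1 ≤ l * (m + 1) := Nat.le_mul_of_pos_left _ hl
  omega

section pathIdeal

variable (K : Type) [Field K] (n m : ℕ)

theorem pathGen_eq_prod_varsAt (i : ℕ) :
    pathGen K n m i = ∏ a ∈ varsAt n (fun t => i ≤ t ∧ t < i + m), X a :=
  rfl

theorem pathGenDiv_eq_prod_varsAt (i p : ℕ) :
    pathGenDiv K n m i p = ∏ a ∈ varsAt n (fun t => (i ≤ t ∧ t < i + m) ∧ t ≠ p), X a :=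
  rfl

theorem pathIdeal_eq_span_image :
    pathIdeal K n m = Ideal.span ((fun i => ∏ a ∈ varsAt n (fun t => i ≤ t ∧ t < i + m), X a) ''
      {i | 1 ≤ i ∧ i ≤ n - m + 1}) := by
  rw [pathIdeal]
  congr 1
  ext q
  simp [pathGen_eq_prod_varsAt, eq_comm, and_assoc]

end pathIdeal

def colonGens (K : Type) [Field K] (n m j : ℕ) : Set (MvPolynomial (Fin n) K) :=
  {q | ∃ l i : ℕ, l + 1 ≤ j ∧ l * (m + 1) + 1 ≤ i ∧ i ≤ (l + 1) * (m + 1) - 1 ∧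
      q = pathGenDiv K n m i ((l + 1) * (m + 1) - 1)} ∪
    {xv K n ((j + 1) * (m + 1) - 1)} ∪
    {q | ∃ i : ℕ, (j + 1) * (m + 1) ≤ i ∧ i ≤ n - m + 1 ∧ q = pathGen K n m i}

section colonGens

variable (K : Type) [Field K] {n m j : ℕ}

theorem pathGenDiv_mem_colonGens {l i : ℕ} (hl : l + 1 ≤ j) (h₁ : l * (m + 1) + 1 ≤ i)
    (h₂ : i ≤ (l + 1) * (m + 1) - 1) :
    pathGenDiv K n m i ((l + 1) * (m + 1) - 1) ∈ colonGens K n m j :=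
  Or.inl (Or.inl ⟨l, i, hl, h₁, h₂, rfl⟩)

theorem xv_mem_colonGens : xv K n ((j + 1) * (m + 1) - 1) ∈ colonGens K n m j :=
  Or.inl (Or.inr rfl)

theorem pathGen_mem_colonGens {i : ℕ} (h₁ : (j + 1) * (m + 1) ≤ i) (h₂ : i ≤ n - m + 1) :
    pathGen K n m i ∈ colonGens K n m j :=
  Or.inr ⟨i, h₁, h₂, rfl⟩

theorem exists_mem_colonGens_dvd (hm : 1 ≤ m) (hj : (j + 1) * (m + 1) ≤ n + 1) {i : ℕ}
    (hi : 1 ≤ i) (hin : i ≤ n - m + 1) :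
    ∃ g ∈ colonGens K n m j, g ∣ ∏ a ∈ varsAt n (fun t => i ≤ t ∧ t < i + m) \
      varsAt n (· ∈ markedPos m j), X a := by
  rw [varsAt_sdiff]
  obtain ⟨q, r, rfl, hr⟩ : ∃ q r, i = q * (m + 1) + r ∧ r < m + 1 :=
    ⟨i / (m + 1), i % (m + 1), (Nat.div_add_mod' i (m + 1)).symm, Nat.mod_lt _ (by omega)⟩
  have hsucc (q : ℕ) : (q + 1) * (m + 1) = q * (m + 1) + (m + 1) := add_one_mul q (m + 1)
  have hsucc₂ (q : ℕ) : (q + 2) * (m + 1) = q * (m + 1) + 2 * (m + 1) := by ring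
  rcases Nat.lt_or_ge j q with hjq | hqj
  · have : (j + 1) * (m + 1) ≤ q * (m + 1) := Nat.mul_le_mul_right _ hjq
    have := hsucc j
    refine ⟨_, pathGen_mem_colonGens K (by omega) hin, ?_⟩
    rw [pathGen_eq_prod_varsAt]
    refine Finset.prod_dvd_prod_of_subset _ _ _ (varsAt_mono fun t ht => ⟨ht, fun hmk => ?_⟩)
    have := lt_of_mem_markedPos hmk
    omega
  rcases Nat.eq_zero_or_pos r with rfl | hr₀
  · rcases q with _ | l
    · simp at hi
    have := hsucc l
    refine ⟨_, pathGenDiv_mem_colonGens K (i := (l + 1) * (m + 1) - 1) hqj (by omega) le_rfl, ?_⟩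
    rw [pathGenDiv_eq_prod_varsAt]
    refine Finset.prod_dvd_prod_of_subset _ _ _
      (varsAt_mono fun t ⟨⟨h₁, h₂⟩, h₃⟩ => ⟨⟨by omega, by omega⟩, fun hmk => ?_⟩)
    have := hsucc (l + 1)
    have := hsucc₂ (l + 1)
    have := succ_eq_of_mem_markedPos (q := l + 1) hmk (by omega) (by omega)
    omega
  have := hsucc q
  rcases hqj.lt_or_eq with hqj | rfl
  · refine ⟨_, pathGenDiv_mem_colonGens K (i := q * (m + 1) + r) hqj (by omega) (by omega), ?_⟩
    rw [pathGenDiv_eq_prod_varsAt]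
    refine Finset.prod_dvd_prod_of_subset _ _ _
      (varsAt_mono fun t ⟨⟨h₁, h₂⟩, h₃⟩ => ⟨⟨h₁, h₂⟩, fun hmk => ?_⟩)
    have := hsucc₂ q
    have := succ_eq_of_mem_markedPos (q := q) hmk (by omega) (by omega)
    omega
  · refine ⟨_, xv_mem_colonGens K, xv_dvd_prod_varsAt (by omega) (by omega) _
      ⟨⟨by omega, by omega⟩, fun hmk => ?_⟩⟩
    have := lt_of_mem_markedPos hmk
    omega

theorem exists_dvd_of_mem_colonGens (hj : (j + 1) * (m + 1) ≤ n + 1) {g : MvPolynomial (Fin n) K}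
    (hg : g ∈ colonGens K n m j) :
    ∃ h ∈ (fun i => ∏ a ∈ varsAt n (fun t => i ≤ t ∧ t < i + m) \ varsAt n (· ∈ markedPos m j),
        X a) '' {i | 1 ≤ i ∧ i ≤ n - m + 1} ∪
      {xv K n ((j + 1) * (m + 1) - 1)}, h ∣ g := by
  rcases hg with (⟨l, i, hl, h₁, h₂, rfl⟩ | rfl) | ⟨i, h₁, h₂, rfl⟩
  · have : (l + 1) * (m + 1) ≤ j * (m + 1) := Nat.mul_le_mul_right _ hl
    have := add_one_mul j (m + 1)
    refine ⟨_, Or.inl ⟨i, ⟨by omega, by omega⟩, rfl⟩, ?_⟩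
    simp only [pathGenDiv_eq_prod_varsAt, varsAt_sdiff]
    refine Finset.prod_dvd_prod_of_subset _ _ _ (varsAt_mono fun t ⟨ht, hmk⟩ => ⟨ht, ?_⟩)
    rintro rfl
    exact hmk (mul_sub_one_mem_markedPos (by omega) hl)
  · exact ⟨_, Or.inr rfl, dvd_rfl⟩
  · have : 0 < (j + 1) * (m + 1) := by positivity
    refine ⟨_, Or.inl ⟨i, ⟨by omega, h₂⟩, rfl⟩, ?_⟩
    rw [pathGen_eq_prod_varsAt]
    exact Finset.prod_dvd_prod_of_subset _ _ _ Finset.sdiff_subset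

end colonGens

theorem stmt_11_general (K : Type) [Field K] (n m : ℕ) (hm : 3 ≤ m)
    (k : ℕ) (hk : k = (n + 1) / (m + 1)) (j : ℕ) (hjk : j + 1 ≤ k) :
    (pathIdeal K n m).colon
        (Ideal.span {∏ l ∈ Finset.Icc 1 j, xv K n (l * (m + 1) - 1)}) +
      Ideal.span {xv K n ((j + 1) * (m + 1) - 1)} =
      Ideal.span
        ({q | ∃ l i : ℕ, l + 1 ≤ j ∧ l * (m + 1) + 1 ≤ i ∧ i ≤ (l + 1) * (m + 1) - 1 ∧
            q = pathGenDiv K n m i ((l + 1) * (m + 1) - 1)} ∪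
          {xv K n ((j + 1) * (m + 1) - 1)} ∪
          {q | ∃ i : ℕ, (j + 1) * (m + 1) ≤ i ∧ i ≤ n - m + 1 ∧ q = pathGen K n m i}) := by
  have hj : (j + 1) * (m + 1) ≤ n + 1 := (Nat.le_div_iff_mul_le (by omega)).1 (hk ▸ hjk)
  have := add_one_mul j (m + 1)
  rw [pathIdeal_eq_span_image, prod_xv_markedPos K (by omega) (by omega), colon_span_prod_X_image,
    Submodule.add_eq_sup, ← Ideal.span_union]
  change _ = Ideal.span (colonGens K n m j)
  refine le_antisymm (Ideal.span_le_span_of_forall_dvd ?_)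
    (Ideal.span_le_span_of_forall_dvd fun g hg => exists_dvd_of_mem_colonGens K hj hg)
  rintro _ (⟨i, ⟨hi, hin⟩, rfl⟩ | rfl)
  · exact exists_mem_colonGens_dvd K (by omega) hj hi hin
  · exact ⟨_, xv_mem_colonGens K, dvd_rfl⟩

/-- For `m ≥ 3`, `n ≥ 2m`, `k = ⌊(n+1)/(m+1)⌋` and `1 ≤ j ≤ k-1`, with
`L_j = (I_{n,m} : x_m x_{2m+1} ⋯ x_{j(m+1)-1})`, the ideal
`U_{j+1} = L_j + (x_{(j+1)(m+1)-1})` is generated by the monomials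
`u_i / x_{(l+1)(m+1)-1}` for `0 ≤ l ≤ j-1` and `l(m+1)+1 ≤ i ≤ (l+1)(m+1)-1`,
the variable `x_{(j+1)(m+1)-1}`, and the monomials `u_i` for `(j+1)(m+1) ≤ i ≤ n-m+1`. -/
theorem stmt_11 (K : Type) [Field K] (n m : ℕ) (hm : 3 ≤ m) (hn : 2 * m ≤ n)
    (k : ℕ) (hk : k = (n + 1) / (m + 1)) (j : ℕ) (hj : 1 ≤ j) (hjk : j + 1 ≤ k) :
    (pathIdeal K n m).colon
        (Ideal.span {∏ l ∈ Finset.Icc 1 j, xv K n (l * (m + 1) - 1)}) +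
      Ideal.span {xv K n ((j + 1) * (m + 1) - 1)} =
      Ideal.span
        ({q | ∃ l i : ℕ, l + 1 ≤ j ∧ l * (m + 1) + 1 ≤ i ∧ i ≤ (l + 1) * (m + 1) - 1 ∧
            q = pathGenDiv K n m i ((l + 1) * (m + 1) - 1)} ∪
          {xv K n ((j + 1) * (m + 1) - 1)} ∪
          {q | ∃ i : ℕ, (j + 1) * (m + 1) ≤ i ∧ i ≤ n - m + 1 ∧ q = pathGen K n m i}) :=
  stmt_11_general K n m hm k hk j hjk
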